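/- arXiv:1207.4843 — 2 statements merged into one kernel-verified Lean document; each statement's English description precedes it below -/
import Mathlib

section
/- Let E ⊂ R^d and α > 0 satisfy 0 < P^α(E) < ∞, where P^α is α-dimensional packing measure. Then for P^α-almost every x ∈ E, the lower α-density liminf_{r→0} P^α(E ∩ B(x,r)) / (2r)^α equals 1. -/
/-!
The packing premeasure `P₀^α` is additive on positively separated sets, so `P^α` is a metric
outer measure and its restriction to `E` is a finite Borel measure `μ`, `μ(B) = P^α(E ∩ B)`.

If `μ(B(x,t)) ≥ q (2t)^α` with `q > 1` at all scales `t < b` and all `x` of `S ⊆ E`, every packing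
of `S` by balls of radius `δ < b` has weight at most `μ(S_δ) / q`, `S_δ` the `δ`-neighbourhood of
`S`. The set of such `x` is closed, so letting `δ → 0` gives `q P^α(S) ≤ μ(closure S) ≤ P^α(S)`.

If `μ(B(x,t)) ≤ q (2t)^α` with `q < 1` at arbitrarily small scales for all `x` of `S ⊆ E`, the
Besicovitch covering theorem yields disjoint balls of this kind, shrunk by a factor `1 + ε`, that
cover `S` up to a `μ`-null set. Hence `P^α(T) ≤ q (1 + ε)^α P₀^α(T)` for all `T ⊆ S`, which gives
`P^α(S) ≤ q (1 + ε)^α P^α(S)`.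

In both cases `P^α(S) = 0`, and countably many such sets (rational `q`) cover the points of `E`
where the lower density is not `1`.
-/

open Metric Set MeasureTheory ENNReal Filter

noncomputable section

abbrev Euc (d : ℕ) : Type := EuclideanSpace ℝ (Fin d)

/-- A `δ`-packing of `E`: a countable family of pairwise disjoint open balls with
centers in `E` and radii at most `δ` (radius `0` gives an empty ball, allowing
finite packings). -/
def IsPacking {d : ℕ} (δ : ℝ) (E : Set (Euc d)) (c : ℕ → Euc d) (ρ : ℕ → ℝ) : Prop :=
  (∀ n, c n ∈ E) ∧ (∀ n, 0 ≤ ρ n ∧ ρ n ≤ δ) ∧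
    ∀ m n, m ≠ n → Disjoint (ball (c m) (ρ m)) (ball (c n) (ρ n))

/-- `P^s_δ(E)`: the supremum of `∑ diam(B_i)^s` over all `δ`-packings of `E`. -/
noncomputable def packCount {d : ℕ} (s δ : ℝ) (E : Set (Euc d)) : ℝ≥0∞ :=
  ⨆ (c : ℕ → Euc d) (ρ : ℕ → ℝ) (_ : IsPacking δ E c ρ),
    ∑' n, if 0 < ρ n then ENNReal.ofReal ((2 * ρ n) ^ s) else 0

/-- The `s`-dimensional packing premeasure `P₀^s(E) = inf_{δ>0} P^s_δ(E)`. -/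
noncomputable def packingPre {d : ℕ} (s : ℝ) (E : Set (Euc d)) : ℝ≥0∞ :=
  ⨅ (δ : ℝ) (_ : 0 < δ), packCount s δ E

/-- The `s`-dimensional packing measure
`P^s(E) = inf { ∑ P₀^s(E_n) : E ⊆ ⋃ E_n }`. -/
noncomputable def packingMeasure {d : ℕ} (s : ℝ) (E : Set (Euc d)) : ℝ≥0∞ :=
  ⨅ (F : ℕ → Set (Euc d)) (_ : E ⊆ ⋃ n, F n), ∑' n, packingPre s (F n)

/-- Composition `f_{i₁} ∘ ⋯ ∘ f_{i_k}` along a word. -/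
def wcomp {d N : ℕ} (f : Fin N → Euc d → Euc d) : List (Fin N) → Euc d → Euc d
  | [] => id
  | i :: w => f i ∘ wcomp f w

/-- `K` is in general position: it is not contained in any proper affine subspace
(in particular, in no hyperplane). -/
def GeneralPosition {d : ℕ} (K : Set (Euc d)) : Prop :=
  ∀ H : AffineSubspace ℝ (Euc d), K ⊆ (H : Set (Euc d)) → H = ⊤

open Topology Function

section Premeasure

variable {d : ℕ}

def ballWeight (s r : ℝ) : ℝ≥0∞ :=
  if 0 < r then ENNReal.ofReal ((2 * r) ^ s) else 0

lemma ballWeight_of_pos {s r : ℝ} (hr : 0 < r) :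
    ballWeight s r = ENNReal.ofReal ((2 * r) ^ s) :=
  if_pos hr

lemma ballWeight_zero (s : ℝ) : ballWeight s 0 = 0 :=
  if_neg (lt_irrefl 0)

lemma le_packCount {s δ : ℝ} {E : Set (Euc d)} {c : ℕ → Euc d} {ρ : ℕ → ℝ}
    (h : IsPacking δ E c ρ) : ∑' n, ballWeight s (ρ n) ≤ packCount s δ E :=
  le_iSup₂_of_le c ρ (le_iSup_of_le h le_rfl)

lemma packCount_le {s δ : ℝ} {E : Set (Euc d)} {a : ℝ≥0∞}
    (h : ∀ c ρ, IsPacking δ E c ρ → ∑' n, ballWeight s (ρ n) ≤ a) : packCount s δ E ≤ a :=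
  iSup₂_le fun c ρ => iSup_le (h c ρ)

lemma packCount_mono {s δ δ' : ℝ} {E F : Set (Euc d)} (hδ : δ ≤ δ') (hEF : E ⊆ F) :
    packCount s δ E ≤ packCount s δ' F :=
  packCount_le fun _ _ h =>
    le_packCount ⟨fun n => hEF (h.1 n), fun n => ⟨(h.2.1 n).1, (h.2.1 n).2.trans hδ⟩, h.2.2⟩

lemma packCount_empty (s δ : ℝ) : packCount s δ (∅ : Set (Euc d)) = 0 :=
  nonpos_iff_eq_zero.1 <| packCount_le fun _ _ h => (h.1 0).elim

lemma packCount_eq_biSup (s δ : ℝ) (E : Set (Euc d)) :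
    packCount s δ E = ⨆ p : (ℕ → Euc d) × (ℕ → ℝ), ⨆ (_ : IsPacking δ E p.1 p.2),
      ∑' n, ballWeight s (p.2 n) := by
  rw [iSup_prod]
  rfl

lemma tsum_ballWeight_le_packCount {ι : Type*} [Countable ι] {s δ : ℝ} {E : Set (Euc d)}
    {c : ι → Euc d} {ρ : ι → ℝ} (hc : ∀ i, c i ∈ E) (hρ : ∀ i, 0 ≤ ρ i ∧ ρ i ≤ δ)
    (hdisj : Pairwise (Disjoint on fun i => ball (c i) (ρ i))) :
    ∑' i, ballWeight s (ρ i) ≤ packCount s δ E := by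
  rcases isEmpty_or_nonempty ι with _ | ⟨⟨i₀⟩⟩
  · simp
  -- Relabel along an injection `ι → ℕ`, padding with empty balls.
  obtain ⟨e, he⟩ := exists_injective_nat ι
  set C : ℕ → Euc d := extend e c fun _ => c i₀
  set R : ℕ → ℝ := extend e ρ 0
  have hCR : ∀ n, (∃ i, e i = n ∧ C n = c i ∧ R n = ρ i) ∨ (C n = c i₀ ∧ R n = 0) := by
    intro n
    by_cases hn : ∃ i, e i = n
    · obtain ⟨i, rfl⟩ := hn
      exact Or.inl ⟨i, rfl, he.extend_apply _ _ _, he.extend_apply _ _ _⟩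
    · exact Or.inr ⟨extend_apply' _ _ _ hn, extend_apply' _ _ _ hn⟩
  have hpack : IsPacking δ E C R := by
    refine ⟨fun n => ?_, fun n => ?_, fun m n hmn => ?_⟩
    · rcases hCR n with ⟨i, -, hC, -⟩ | ⟨hC, -⟩ <;> rw [hC] <;> exact hc _
    · rcases hCR n with ⟨i, -, -, hR⟩ | ⟨-, hR⟩ <;> rw [hR]
      exacts [hρ i, ⟨le_rfl, (hρ i₀).1.trans (hρ i₀).2⟩]
    · rcases hCR n with ⟨j, rfl, -, -⟩ | ⟨-, hR⟩
      · rcases hCR m with ⟨i, rfl, -, -⟩ | ⟨-, hR⟩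
        · simp only [C, R, he.extend_apply]
          exact hdisj fun hij => hmn (congrArg e hij)
        · rw [hR, ball_zero]; exact empty_disjoint _
      · rw [hR, ball_zero]; exact disjoint_empty _
  have hsum : (fun n => ballWeight s (R n)) = extend e (fun i => ballWeight s (ρ i)) 0 := by
    funext n
    rw [apply_extend (ballWeight s)]
    congr 1
    funext
    exact ballWeight_zero s
  calc ∑' i, ballWeight s (ρ i) = ∑' n, ballWeight s (R n) := by
        rw [hsum, tsum_extend_zero he]
    _ ≤ packCount s δ E := le_packCount hpack

lemma packCount_add_packCount_le {s δ r : ℝ} {E F : Set (Euc d)} (hδ0 : 0 ≤ δ) (hδ : 2 * δ ≤ r)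
    (hEF : ∀ x ∈ E, ∀ y ∈ F, r ≤ dist x y) :
    packCount s δ E + packCount s δ F ≤ packCount s δ (E ∪ F) := by
  rcases E.eq_empty_or_nonempty with rfl | ⟨x, hx⟩
  · simp [packCount_empty]
  rcases F.eq_empty_or_nonempty with rfl | ⟨y, hy⟩
  · simp [packCount_empty]
  have exists_packing : ∀ {G : Set (Euc d)} {z : Euc d}, z ∈ G →
      ∃ p : (ℕ → Euc d) × (ℕ → ℝ), IsPacking δ G p.1 p.2 := fun {G z} hz =>
    ⟨(fun _ => z, 0), fun _ => hz, fun _ => ⟨le_rfl, hδ0⟩, fun _ _ _ => by simp⟩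
  rw [packCount_eq_biSup, packCount_eq_biSup]
  refine ENNReal.biSup_add_biSup_le' (exists_packing hx) (exists_packing hy) fun p hp p' hp' => ?_
  calc _ = ∑' i, ballWeight s (Sum.elim p.2 p'.2 i) :=
        (ENNReal.summable.tsum_sum ENNReal.summable).symm
    _ ≤ _ := tsum_ballWeight_le_packCount (c := Sum.elim p.1 p'.1) (ρ := Sum.elim p.2 p'.2)
      (by rintro (n | n); exacts [Or.inl (hp.1 n), Or.inr (hp'.1 n)])
      (by rintro (n | n); exacts [hp.2.1 n, hp'.2.1 n]) ?_
  rintro (m | m) (n | n) hmn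
  · exact hp.2.2 m n fun h => hmn (congrArg _ h)
  · have hsep := hEF _ (hp.1 m) _ (hp'.1 n)
    exact ball_disjoint_ball (by linarith [(hp.2.1 m).2, (hp'.2.1 n).2] :
      p.2 m + p'.2 n ≤ dist (p.1 m) (p'.1 n))
  · have hsep := (hEF _ (hp.1 n) _ (hp'.1 m)).trans_eq (dist_comm _ _)
    exact ball_disjoint_ball (by linarith [(hp'.2.1 m).2, (hp.2.1 n).2] :
      p'.2 m + p.2 n ≤ dist (p'.1 m) (p.1 n))
  · exact hp'.2.2 m n fun h => hmn (congrArg _ h)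

end Premeasure

section PackingMeasure

variable {d : ℕ}

lemma packingPre_le_packCount {s δ : ℝ} (hδ : 0 < δ) (E : Set (Euc d)) :
    packingPre s E ≤ packCount s δ E :=
  iInf₂_le δ hδ

lemma packingPre_empty (s : ℝ) : packingPre s (∅ : Set (Euc d)) = 0 :=
  nonpos_iff_eq_zero.1 <| (packingPre_le_packCount one_pos _).trans (packCount_empty s 1).le

lemma packingPre_mono {s : ℝ} {E F : Set (Euc d)} (h : E ⊆ F) :
    packingPre s E ≤ packingPre s F :=
  iInf₂_mono fun _ _ => packCount_mono le_rfl h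

lemma le_mul_packingPre {s : ℝ} {E : Set (Euc d)} {a c : ℝ≥0∞} (hc : c ≠ ⊤)
    (h : ∀ δ > 0, a ≤ c * packCount s δ E) : a ≤ c * packingPre s E := by
  have : Nonempty {δ : ℝ // 0 < δ} := ⟨⟨1, one_pos⟩⟩
  rw [packingPre, iInf_subtype', ENNReal.mul_iInf fun h => (hc h).elim]
  exact le_iInf fun δ => h δ δ.2

lemma packingPre_add_packingPre_le {s r : ℝ} {E F : Set (Euc d)} (hr : 0 < r)
    (hEF : ∀ x ∈ E, ∀ y ∈ F, r ≤ dist x y) :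
    packingPre s E + packingPre s F ≤ packingPre s (E ∪ F) := by
  refine le_iInf₂ fun δ hδ => ?_
  have hδ' : 0 < min δ (r / 2) := lt_min hδ (half_pos hr)
  calc packingPre s E + packingPre s F
      ≤ packCount s (min δ (r / 2)) E + packCount s (min δ (r / 2)) F :=
        add_le_add (packingPre_le_packCount hδ' E) (packingPre_le_packCount hδ' F)
    _ ≤ packCount s (min δ (r / 2)) (E ∪ F) :=
        packCount_add_packCount_le hδ'.le (by linarith [min_le_right δ (r / 2)]) hEF
    _ ≤ packCount s δ (E ∪ F) := packCount_mono (min_le_left _ _) le_rfl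

def packingOuterMeasure (s : ℝ) : OuterMeasure (Euc d) :=
  OuterMeasure.ofFunction (packingPre s) (packingPre_empty s)

lemma packingOuterMeasure_apply (s : ℝ) (E : Set (Euc d)) :
    packingOuterMeasure s E = packingMeasure s E :=
  rfl

lemma packingOuterMeasure_le_tsum {s : ℝ} {E : Set (Euc d)} {G : ℕ → Set (Euc d)}
    (h : E ⊆ ⋃ n, G n) : packingOuterMeasure s E ≤ ∑' n, packingPre s (G n) :=
  iInf₂_le G h

lemma Metric.AreSeparated.exists_pos_le_dist {X : Type*} [PseudoMetricSpace X] {E F : Set X}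
    (h : AreSeparated E F) : ∃ r > 0, ∀ x ∈ E, ∀ y ∈ F, r ≤ dist x y := by
  obtain ⟨r, hr0, hr⟩ := h
  obtain ⟨ε, -, hε, hεr⟩ := ENNReal.lt_iff_exists_real_btwn.1 (pos_iff_ne_zero.2 hr0)
  refine ⟨ε, ENNReal.ofReal_pos.1 hε, fun x hx y hy => ?_⟩
  rw [← ENNReal.ofReal_le_ofReal_iff dist_nonneg, ← edist_dist]
  exact hεr.le.trans (hr x hx y hy)

lemma isMetric_packingOuterMeasure (s : ℝ) : (packingOuterMeasure (d := d) s).IsMetric := by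
  intro E F hEF
  obtain ⟨r, hr, hsep⟩ := hEF.exists_pos_le_dist
  refine le_antisymm (measure_union_le E F) ?_
  refine le_iInf₂ fun G hG => ?_
  have hcover : ∀ A ⊆ E ∪ F, A ⊆ ⋃ n, G n ∩ A := fun A hA x hx =>
    let ⟨n, hn⟩ := mem_iUnion.1 (hG (hA hx)); mem_iUnion.2 ⟨n, hn, hx⟩
  calc packingOuterMeasure s E + packingOuterMeasure s F
      ≤ ∑' n, packingPre s (G n ∩ E) + ∑' n, packingPre s (G n ∩ F) :=
        add_le_add (packingOuterMeasure_le_tsum (hcover E subset_union_left))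
          (packingOuterMeasure_le_tsum (hcover F subset_union_right))
    _ = ∑' n, (packingPre s (G n ∩ E) + packingPre s (G n ∩ F)) := ENNReal.tsum_add.symm
    _ ≤ ∑' n, packingPre s (G n) := ENNReal.tsum_le_tsum fun n =>
        (packingPre_add_packingPre_le hr fun x hx y hy => hsep x hx.2 y hy.2).trans
          (packingPre_mono (union_subset inter_subset_left inter_subset_left))

lemma OuterMeasure.IsMetric.restrict {X : Type*} [EMetricSpace X] {μ : OuterMeasure X}
    (hμ : μ.IsMetric) (E : Set X) : (OuterMeasure.restrict E μ).IsMetric := by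
  intro S T h
  simp only [OuterMeasure.restrict_apply, union_inter_distrib_right]
  exact hμ _ _ (h.mono inter_subset_left inter_subset_left)

def packingRestrict (s : ℝ) (E : Set (Euc d)) : Measure (Euc d) :=
  (OuterMeasure.restrict E (packingOuterMeasure s)).toMeasure
    (BorelSpace.measurable_eq.trans_le
      ((OuterMeasure.IsMetric.restrict (isMetric_packingOuterMeasure s) E).borel_le_caratheodory))

lemma packingRestrict_apply (s : ℝ) (E : Set (Euc d)) {M : Set (Euc d)} (hM : MeasurableSet M) :
    packingRestrict s E M = packingOuterMeasure s (E ∩ M) := by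
  rw [packingRestrict, toMeasure_apply _ _ hM, OuterMeasure.restrict_apply, inter_comm]

lemma packingOuterMeasure_inter_le_packingRestrict (s : ℝ) (E M : Set (Euc d)) :
    packingOuterMeasure s (E ∩ M) ≤ packingRestrict s E M := by
  rw [inter_comm, ← OuterMeasure.restrict_apply]
  exact le_toMeasure_apply _ _ M

lemma isFiniteMeasure_packingRestrict {s : ℝ} {E : Set (Euc d)}
    (hE : packingOuterMeasure s E ≠ ⊤) : IsFiniteMeasure (packingRestrict s E) :=
  ⟨by rwa [packingRestrict_apply s E MeasurableSet.univ, inter_univ, lt_top_iff_ne_top]⟩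

end PackingMeasure

section DensitySets

variable {X : Type*} [PseudoMetricSpace X] [MeasurableSpace X]

def highDensitySet (μ : Measure X) (s : ℝ) (q : ℝ≥0∞) (b : ℝ) : Set X :=
  {x | ∀ t, 0 < t → t < b → q * ENNReal.ofReal ((2 * t) ^ s) ≤ μ (ball x t)}

def lowDensitySet (μ : Measure X) (s : ℝ) (q : ℝ≥0∞) : Set X :=
  {x | ∃ᶠ t in 𝓝[>] 0, μ (ball x t) ≤ q * ENNReal.ofReal ((2 * t) ^ s)}

lemma ofReal_two_mul_rpow_ne_zero {t : ℝ} (ht : 0 < t) (s : ℝ) :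
    ENNReal.ofReal ((2 * t) ^ s) ≠ 0 := by
  positivity

lemma isClosed_highDensitySet (μ : Measure X) (s : ℝ) (q : ℝ≥0∞) (b : ℝ) :
    IsClosed (highDensitySet μ s q b) := by
  refine isClosed_of_closure_subset fun x hx t ht htb => ?_
  have hlim : Tendsto (fun t' : ℝ => q * ENNReal.ofReal ((2 * t') ^ s)) (𝓝[<] t)
      (𝓝 (q * ENNReal.ofReal ((2 * t) ^ s))) := by
    refine ENNReal.Tendsto.const_mul ?_ (Or.inl (ofReal_two_mul_rpow_ne_zero ht s))
    refine (ENNReal.continuous_ofReal.tendsto _).comp (tendsto_nhdsWithin_of_tendsto_nhds ?_)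
    exact ((Real.continuousAt_rpow_const _ s (Or.inl (mul_pos two_pos ht).ne')).comp
      (continuous_const.mul continuous_id).continuousAt).tendsto
  refine le_of_tendsto hlim ?_
  filter_upwards [Ioo_mem_nhdsLT ht] with t' ht'
  obtain ⟨y, hy, hxy⟩ := Metric.mem_closure_iff.1 hx (t - t') (sub_pos.2 ht'.2)
  refine (hy t' ht'.1 (ht'.2.trans htb)).trans (measure_mono (ball_subset_ball' ?_))
  linarith [dist_comm x y]

lemma exists_mem_highDensitySet_of_lt_liminf {μ : Measure X} {s : ℝ} {q : ℝ≥0∞} {x : X}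
    (h : q < liminf (fun t => μ (ball x t) / ENNReal.ofReal ((2 * t) ^ s)) (𝓝[>] 0)) :
    ∃ k : ℕ, x ∈ highDensitySet μ s q (1 / (k + 1)) := by
  obtain ⟨u, hu, hIoo⟩ := mem_nhdsGT_iff_exists_Ioo_subset.1 (eventually_lt_of_lt_liminf h)
  obtain ⟨k, hk⟩ := exists_nat_one_div_lt (mem_Ioi.1 hu)
  refine ⟨k, fun t ht htk => ?_⟩
  have hlt : q < μ (ball x t) / ENNReal.ofReal ((2 * t) ^ s) := hIoo ⟨ht, htk.trans hk⟩
  exact ((ENNReal.lt_div_iff_mul_lt (Or.inl (ofReal_two_mul_rpow_ne_zero ht s))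
    (Or.inl ENNReal.ofReal_ne_top)).1 hlt).le

lemma mem_lowDensitySet_of_liminf_lt {μ : Measure X} {s : ℝ} {q : ℝ≥0∞} {x : X}
    (h : liminf (fun t => μ (ball x t) / ENNReal.ofReal ((2 * t) ^ s)) (𝓝[>] 0) < q) :
    x ∈ lowDensitySet μ s q := by
  refine (frequently_lt_of_liminf_lt (h := h)).mp
    (eventually_mem_nhdsWithin.mono fun t ht hlt => ?_)
  exact ((ENNReal.div_lt_iff (Or.inl (ofReal_two_mul_rpow_ne_zero ht s))
    (Or.inl ENNReal.ofReal_ne_top)).1 hlt).le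

end DensitySets

lemma ENNReal.eq_zero_of_mul_le_self {a q : ℝ≥0∞} (ha : a ≠ ⊤) (hq : 1 < q) (h : q * a ≤ a) :
    a = 0 := by
  by_contra h0
  have hlt : 1 * a < q * a := (ENNReal.mul_lt_mul_iff_left h0 ha).2 hq
  rw [one_mul] at hlt
  exact h.not_gt hlt

lemma ENNReal.eq_zero_of_le_mul_self {a c : ℝ≥0∞} (ha : a ≠ ⊤) (hc : c < 1) (h : a ≤ c * a) :
    a = 0 := by
  by_contra h0
  have hlt : c * a < 1 * a := (ENNReal.mul_lt_mul_iff_left h0 ha).2 hc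
  rw [one_mul] at hlt
  exact h.not_gt hlt

section UpperDensity

variable {d : ℕ}

lemma mul_packCount_le_measure_thickening (μ : Measure (Euc d)) {s b δ : ℝ} {q : ℝ≥0∞}
    {S : Set (Euc d)} (hS : S ⊆ highDensitySet μ s q b) (hδ : δ < b) :
    q * packCount s δ S ≤ μ (thickening δ S) := by
  rw [packCount_eq_biSup, ENNReal.mul_iSup]
  refine iSup_le fun ⟨c, ρ⟩ => ?_
  rw [ENNReal.mul_iSup]
  refine iSup_le fun (hp : IsPacking δ S c ρ) => ?_
  have hterm : ∀ n, q * ballWeight s (ρ n) ≤ μ (ball (c n) (ρ n)) := by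
    intro n
    rcases (hp.2.1 n).1.eq_or_lt with h0 | hpos
    · rw [← h0, ballWeight_zero, mul_zero]
      exact zero_le
    · rw [ballWeight_of_pos hpos]
      exact hS (hp.1 n) _ hpos ((hp.2.1 n).2.trans_lt hδ)
  calc q * ∑' n, ballWeight s (ρ n) = ∑' n, q * ballWeight s (ρ n) := ENNReal.tsum_mul_left.symm
    _ ≤ ∑' n, μ (ball (c n) (ρ n)) := ENNReal.tsum_le_tsum hterm
    _ = μ (⋃ n, ball (c n) (ρ n)) :=
        (measure_iUnion (fun m n h => hp.2.2 m n h) fun _ => measurableSet_ball).symm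
    _ ≤ μ (thickening δ S) := measure_mono <| iUnion_subset fun n _ hz =>
        mem_thickening_iff.2 ⟨c n, hp.1 n, (mem_ball.1 hz).trans_le (hp.2.1 n).2⟩

lemma packingOuterMeasure_inter_highDensitySet_eq_zero {s b : ℝ} {q : ℝ≥0∞} {E : Set (Euc d)}
    (hE : packingOuterMeasure s E ≠ ⊤) (hq : 1 < q) (hb : 0 < b) :
    packingOuterMeasure s (E ∩ highDensitySet (packingRestrict s E) s q b) = 0 := by
  have := isFiniteMeasure_packingRestrict hE
  set μ := packingRestrict s E
  set S := E ∩ highDensitySet μ s q b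
  have hthickening : ∀ δ ∈ Ioo 0 b, q * packingOuterMeasure s S ≤ μ (thickening δ S) :=
    fun δ hδ => calc
      q * packingOuterMeasure s S ≤ q * packCount s δ S := by
        gcongr
        exact (OuterMeasure.ofFunction_le S).trans (packingPre_le_packCount hδ.1 S)
      _ ≤ μ (thickening δ S) := mul_packCount_le_measure_thickening μ inter_subset_right hδ.2
  have hclosure : q * packingOuterMeasure s S ≤ μ (closure S) :=
    ge_of_tendsto (tendsto_measure_thickening ⟨b, hb, measure_ne_top _ _⟩)
      (eventually_of_mem (Ioo_mem_nhdsGT hb) hthickening)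
  have hclosure_le : μ (closure S) ≤ packingOuterMeasure s S := by
    rw [packingRestrict_apply s E isClosed_closure.measurableSet]
    exact measure_mono (inter_subset_inter_right E
      ((closure_mono inter_subset_right).trans (isClosed_highDensitySet μ s q b).closure_subset))
  exact ENNReal.eq_zero_of_mul_le_self (ne_top_of_le_ne_top hE (measure_mono inter_subset_left))
    hq (hclosure.trans hclosure_le)

end UpperDensity

section LowerDensity

variable {d : ℕ}

lemma exists_pos_mul_ofReal_rpow_lt_one {q : ℝ≥0∞} (hq : q < 1) (s : ℝ) :
    ∃ ε > 0, q * ENNReal.ofReal ((1 + ε) ^ s) < 1 := by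
  have hcont : ContinuousAt (fun ε : ℝ => (1 + ε) ^ s) 0 :=
    (Real.continuousAt_rpow_const _ s (Or.inl (by norm_num))).comp
      (continuous_const.add continuous_id).continuousAt
  have hlim : Tendsto (fun ε : ℝ => q * ENNReal.ofReal ((1 + ε) ^ s)) (𝓝[>] 0) (𝓝 q) := by
    simpa using (ENNReal.Tendsto.const_mul ((ENNReal.continuous_ofReal.tendsto _).comp
      hcont.tendsto) (Or.inr (ne_top_of_lt hq))).mono_left nhdsWithin_le_nhds
  obtain ⟨ε, hε, hε0⟩ := ((hlim.eventually (gt_mem_nhds hq)).and self_mem_nhdsWithin).exists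
  exact ⟨ε, hε0, hε⟩

/-- By the Besicovitch covering theorem, the balls on which the density ratio is below `q`,
shrunk by the factor `1 + ε`, contain packings of `T` covering `T` up to a null set. -/
lemma packingOuterMeasure_le_mul_packCount {s ε δ : ℝ} {q : ℝ≥0∞} {E T : Set (Euc d)}
    (hE : packingOuterMeasure s E ≠ ⊤) (hε : 0 < ε) (hδ : 0 < δ)
    (hT : T ⊆ E ∩ lowDensitySet (packingRestrict s E) s q) :
    packingOuterMeasure s T ≤ q * ENNReal.ofReal ((1 + ε) ^ s) * packCount s δ T := by
  have := isFiniteMeasure_packingRestrict hE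
  set μ := packingRestrict s E
  set c := q * ENNReal.ofReal ((1 + ε) ^ s)
  have hε' : 0 < 1 + ε := by linarith
  set f : Euc d → Set ℝ := fun x =>
    {r | μ (ball x ((1 + ε) * r)) ≤ q * ENNReal.ofReal ((2 * ((1 + ε) * r)) ^ s)}
  have hf : ∀ x ∈ T, ∀ η > 0, (f x ∩ Ioo 0 η).Nonempty := by
    intro x hx η hη
    obtain ⟨t, ⟨ht0, htη⟩, ht⟩ :=
      (nhdsGT_basis 0).frequently_iff.1 (hT hx).2 ((1 + ε) * η) (by positivity)
    refine ⟨t / (1 + ε), ?_, div_pos ht0 hε', (div_lt_iff₀' hε').2 htη⟩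
    simpa only [f, mem_ofPred_eq, mul_div_cancel₀ _ hε'.ne'] using ht
  obtain ⟨t, r, htc, htT, hr, hnull, hdisj⟩ :=
    Besicovitch.exists_disjoint_closedBall_covering_ae μ f T hf (fun _ => δ) fun _ _ => hδ
  have := htc.to_subtype
  have hTU : packingOuterMeasure s (T \ ⋃ x ∈ t, closedBall x (r x)) = 0 := by
    refine nonpos_iff_eq_zero.1 (hnull ▸ ?_)
    calc packingOuterMeasure s (T \ ⋃ x ∈ t, closedBall x (r x))
        = packingOuterMeasure s (E ∩ (T \ ⋃ x ∈ t, closedBall x (r x))) := by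
          rw [inter_eq_right.2 (sdiff_subset.trans (hT.trans inter_subset_left))]
      _ ≤ μ (T \ ⋃ x ∈ t, closedBall x (r x)) :=
          packingOuterMeasure_inter_le_packingRestrict s E _
  have hball : ∀ x ∈ t,
      packingOuterMeasure s (T ∩ closedBall x (r x)) ≤ c * ballWeight s (r x) := by
    intro x hx
    obtain ⟨hrx, hr0, -⟩ := hr x hx
    calc packingOuterMeasure s (T ∩ closedBall x (r x))
        ≤ packingOuterMeasure s (E ∩ ball x ((1 + ε) * r x)) :=
          measure_mono (inter_subset_inter (hT.trans inter_subset_left)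
            (closedBall_subset_ball (by nlinarith)))
      _ ≤ μ (ball x ((1 + ε) * r x)) := packingOuterMeasure_inter_le_packingRestrict s E _
      _ ≤ q * ENNReal.ofReal ((2 * ((1 + ε) * r x)) ^ s) := hrx
      _ = c * ballWeight s (r x) := by
          rw [ballWeight_of_pos hr0, mul_assoc, ← ENNReal.ofReal_mul (by positivity),
            ← Real.mul_rpow hε'.le (by positivity)]
          ring_nf
  have hpack : ∑' x : t, ballWeight s (r x) ≤ packCount s δ T :=
    tsum_ballWeight_le_packCount (fun x => htT x.2)
      (fun x => ⟨(hr x x.2).2.1.le, (hr x x.2).2.2.le⟩)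
      fun x y hxy => (hdisj x.2 y.2 (Subtype.coe_ne_coe.2 hxy)).mono
        ball_subset_closedBall ball_subset_closedBall
  calc packingOuterMeasure s T
      ≤ packingOuterMeasure s (T ∩ ⋃ x ∈ t, closedBall x (r x)) +
          packingOuterMeasure s (T \ ⋃ x ∈ t, closedBall x (r x)) :=
        measure_le_inter_add_sdiff _ _ _
    _ = packingOuterMeasure s (⋃ x ∈ t, T ∩ closedBall x (r x)) := by
        rw [hTU, add_zero, inter_iUnion₂]
    _ ≤ ∑' x : t, packingOuterMeasure s (T ∩ closedBall x (r x)) := measure_biUnion_le _ htc _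
    _ ≤ ∑' x : t, c * ballWeight s (r x) := ENNReal.tsum_le_tsum fun x => hball x x.2
    _ = c * ∑' x : t, ballWeight s (r x) := ENNReal.tsum_mul_left
    _ ≤ c * packCount s δ T := by gcongr

lemma packingOuterMeasure_inter_lowDensitySet_eq_zero {s : ℝ} {q : ℝ≥0∞} {E : Set (Euc d)}
    (hE : packingOuterMeasure s E ≠ ⊤) (hq : q < 1) :
    packingOuterMeasure s (E ∩ lowDensitySet (packingRestrict s E) s q) = 0 := by
  obtain ⟨ε, hε, hc⟩ := exists_pos_mul_ofReal_rpow_lt_one hq s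
  set S := E ∩ lowDensitySet (packingRestrict s E) s q
  set c := q * ENNReal.ofReal ((1 + ε) ^ s)
  -- `P^s` is the largest outer measure below `P₀^s`, and on subsets of `S` we have `P^s ≤ c P₀^s`.
  have hrestrict : OuterMeasure.restrict S (packingOuterMeasure s) ≤ c • packingOuterMeasure s := by
    rw [packingOuterMeasure, OuterMeasure.smul_ofFunction hc.ne_top]
    refine OuterMeasure.le_ofFunction.2 fun T => ?_
    rw [OuterMeasure.restrict_apply]
    calc packingOuterMeasure s (T ∩ S) ≤ c * packingPre s (T ∩ S) :=
          le_mul_packingPre hc.ne_top fun δ hδ =>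
            packingOuterMeasure_le_mul_packCount hE hε hδ inter_subset_right
      _ ≤ c * packingPre s T := by gcongr; exact packingPre_mono inter_subset_left
  have hS : packingOuterMeasure s S ≤ c * packingOuterMeasure s S := by
    simpa only [OuterMeasure.restrict_apply, inter_self, smul_apply, smul_eq_mul]
      using hrestrict S
  exact ENNReal.eq_zero_of_le_mul_self (ne_top_of_le_ne_top hE (measure_mono inter_subset_left))
    hc hS

end LowerDensity

theorem stmt6_general {d : ℕ} (α : ℝ) (E : Set (Euc d))
    (hfin : packingMeasure α E ≠ ⊤) :
    ∃ A : Set (Euc d), A ⊆ E ∧ packingMeasure α A = 0 ∧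
      ∀ x ∈ E \ A,
        Filter.liminf
            (fun t : ℝ => packingMeasure α (E ∩ ball x t) / ENNReal.ofReal ((2 * t) ^ α))
            (nhdsWithin 0 (Set.Ioi 0)) = 1 := by
  set μ := packingRestrict α E
  have hball : ∀ x t, packingMeasure α (E ∩ ball x t) = μ (ball x t) := fun x t =>
    (packingRestrict_apply α E measurableSet_ball).symm
  simp only [hball, ← packingOuterMeasure_apply] at hfin ⊢
  refine ⟨{x ∈ E | liminf (fun t => μ (ball x t) / ENNReal.ofReal ((2 * t) ^ α)) (𝓝[>] 0) ≠ 1},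
    sep_subset _ _, ?_, fun x hx => not_not.1 fun h => hx.2 ⟨hx.1, h⟩⟩
  refine measure_mono_null (t :=
    (⋃ (q : ℚ) (_ : 1 < ENNReal.ofReal q) (k : ℕ),
      E ∩ highDensitySet μ α (ENNReal.ofReal q) (1 / (k + 1))) ∪
    ⋃ (q : ℚ) (_ : ENNReal.ofReal q < 1), E ∩ lowDensitySet μ α (ENNReal.ofReal q)) ?_ ?_
  · rintro x ⟨hxE, hx⟩
    rcases hx.lt_or_gt with hlt | hgt
    · obtain ⟨q, -, hlt', hq1⟩ := ENNReal.lt_iff_exists_rat_btwn.1 hlt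
      exact Or.inr (mem_iUnion₂.2 ⟨q, hq1, hxE, mem_lowDensitySet_of_liminf_lt hlt'⟩)
    · obtain ⟨q, -, h1q, hq⟩ := ENNReal.lt_iff_exists_rat_btwn.1 hgt
      obtain ⟨k, hk⟩ := exists_mem_highDensitySet_of_lt_liminf hq
      exact Or.inl (mem_iUnion₂.2 ⟨q, h1q, mem_iUnion.2 ⟨k, hxE, hk⟩⟩)
  · exact measure_union_null
      (measure_iUnion_null fun q => measure_iUnion_null fun hq => measure_iUnion_null fun k =>
        packingOuterMeasure_inter_highDensitySet_eq_zero hfin hq Nat.one_div_pos_of_nat)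
      (measure_iUnion_null fun q => measure_iUnion_null fun hq =>
        packingOuterMeasure_inter_lowDensitySet_eq_zero hfin hq)

/-- if `0 < P^α(E) < ∞`, then at `P^α`-almost every point of `E`
the lower `α`-density of `P^α` restricted to `E` equals `1`. -/
theorem stmt6 {d : ℕ} (α : ℝ) (hα : 0 < α) (E : Set (Euc d))
    (hpos : 0 < packingMeasure α E) (hfin : packingMeasure α E ≠ ⊤) :
    ∃ A : Set (Euc d), A ⊆ E ∧ packingMeasure α A = 0 ∧
      ∀ x ∈ E \ A,
        Filter.liminf
            (fun t : ℝ => packingMeasure α (E ∩ ball x t) / ENNReal.ofReal ((2 * t) ^ α))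
            (nhdsWithin 0 (Set.Ioi 0)) = 1 :=
  stmt6_general α E hfin
end
end

section
/- Let Δ > 0, f ∈ M_Δ, 0 < ρ < r_*(f)Δ/4, γ > 0. Then there exists δ₁ > 0 such that whenever g, h ∈ M_Δ with D(f,g) ≤ δ₁ and D(f,h) ≤ δ₁, for each ball B(x,r) centered in K(g) with r ∈ [r_*(g)Δ/2, Δ/2] there exists a ball B(y, r−ρ) centered in K(h) such that λ(h)(B(y,r−ρ)) − γ ≤ λ(g)(B(x,r)). -/
open Metric Set MeasureTheory ENNReal Filter

noncomputable section

/-- A self-similar IFS of contracting similitudes on a compact set `X ⊆ ℝ^d`,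
bundled with its attractor `K`. -/
structure IFS (d N : ℕ) (X : Set (Euc d)) where
  f : Fin N → Euc d → Euc d
  r : Fin N → ℝ
  r_pos : ∀ i, 0 < r i
  r_lt1 : ∀ i, r i < 1
  sim : ∀ i x y, dist (f i x) (f i y) = r i * dist x y
  maps : ∀ i, f i '' X ⊆ X
  K : Set (Euc d)
  K_sub : K ⊆ X
  K_cpt : IsCompact K
  K_ne : K.Nonempty
  K_inv : K = ⋃ i, f i '' K

/-- `D(F,G) ≤ δ`, where `D(F,G) = max_i ‖f_i − g_i‖_∞` (supremum over `X`). -/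
def Dle {d N : ℕ} {X : Set (Euc d)} (F G : IFS d N X) (δ : ℝ) : Prop :=
  ∀ i, ∀ x ∈ X, dist (F.f i x) (G.f i x) ≤ δ

/-- Membership in `M_Δ`: the attractor pieces are pairwise at distance `> Δ`. -/
def sep {d N : ℕ} {X : Set (Euc d)} (Δ : ℝ) (F : IFS d N X) : Prop :=
  ∀ i j, i ≠ j → ∀ p ∈ F.f i '' F.K, ∀ q ∈ F.f j '' F.K, Δ < dist p q

/-- Membership in `M_SSC`: the attractor pieces are pairwise disjoint. -/
def ssc {d N : ℕ} {X : Set (Euc d)} (F : IFS d N X) : Prop :=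
  ∀ i j, i ≠ j → Disjoint (F.f i '' F.K) (F.f j '' F.K)

/-- Membership in `M_OSC`: the open set condition holds with some bounded
nonempty open set. -/
def osc {d N : ℕ} {X : Set (Euc d)} (F : IFS d N X) : Prop :=
  ∃ O : Set (Euc d), IsOpen O ∧ O.Nonempty ∧ Bornology.IsBounded O ∧
    (∀ i, F.f i '' O ⊆ O) ∧ ∀ i j, i ≠ j → Disjoint (F.f i '' O) (F.f j '' O)

/-!
Fix a depth `n` so large that the cylinders `g_w(K(g))`, `|w| = n`, are much smaller than `ρ`,
and `δ₁` so small that `g_w` and `h_w` are uniformly `ρ/4`-close and the cylinder weights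
`∏ r_{w_k}(g)^{s(g)}` and `∏ r_{w_k}(h)^{s(h)}` differ by less than `γ / N^n`. The ratios are
controlled by `D` through two points of `K(f)` at distance `> Δ`, and the weights then by the
continuity of the similarity dimension in the ratios. Take `y ∈ K(h)` near `x`: every depth-`n`
cylinder of `h` meeting `B(y, r - ρ)` has its `g`-counterpart inside `B(x, r)`. A self-similar
probability measure lives on its attractor, so by self-similarity it gives a set at most the
total weight of the depth-`n` cylinders meeting it and at least that of the cylinders inside it;
comparing the weights over the at most `N^n` words gives the error `γ`.
-/

open Topology

theorem mapsTo_wcomp {d N : ℕ} {f : Fin N → Euc d → Euc d} {S : Set (Euc d)}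
    (h : ∀ i, MapsTo (f i) S S) (w : List (Fin N)) : MapsTo (wcomp f w) S S := by
  induction w with
  | nil => exact mapsTo_id S
  | cons i w ih => exact (h i).comp ih

namespace IFS

variable {d N : ℕ} {X : Set (Euc d)}

theorem lipschitzWith_f (F : IFS d N X) (i : Fin N) : LipschitzWith (F.r i).toNNReal (F.f i) :=
  LipschitzWith.of_dist_le_mul fun x y => by
    rw [F.sim, Real.coe_toNNReal _ (F.r_pos i).le]

theorem mapsTo_wcomp_X (F : IFS d N X) (w : List (Fin N)) : MapsTo (wcomp F.f w) X X :=
  mapsTo_wcomp (fun i => mapsTo_iff_image_subset.2 (F.maps i)) w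

theorem mapsTo_f_K (F : IFS d N X) (i : Fin N) : MapsTo (F.f i) F.K F.K := fun z hz => by
  rw [F.K_inv]
  exact mem_iUnion.2 ⟨i, z, hz, rfl⟩

theorem mapsTo_wcomp_K (F : IFS d N X) (w : List (Fin N)) : MapsTo (wcomp F.f w) F.K F.K :=
  mapsTo_wcomp F.mapsTo_f_K w

theorem exists_ratio_lt (F : IFS d N X) : ∃ c, 0 < c ∧ c < 1 ∧ ∀ i, F.r i < c := by
  obtain ⟨c, hr, hc⟩ := ((eventually_all.2 fun i => Ioo_mem_nhdsLT (F.r_lt1 i)).and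
    (Ioo_mem_nhdsLT zero_lt_one)).exists
  exact ⟨c, hc.1, hc.2, fun i => (hr i).1⟩

theorem dist_wcomp_le (F : IFS d N X) {c : ℝ} (hc : ∀ i, F.r i ≤ c) (w : List (Fin N))
    (x y : Euc d) : dist (wcomp F.f w x) (wcomp F.f w y) ≤ c ^ w.length * dist x y := by
  induction w with
  | nil => simp [wcomp]
  | cons i w ih =>
    calc dist (F.f i (wcomp F.f w x)) (F.f i (wcomp F.f w y))
        = F.r i * dist (wcomp F.f w x) (wcomp F.f w y) := F.sim i _ _
      _ ≤ c * (c ^ w.length * dist x y) :=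
        mul_le_mul (hc i) ih dist_nonneg ((F.r_pos i).le.trans (hc i))
      _ = c ^ (i :: w).length * dist x y := by rw [List.length_cons, pow_succ]; ring

theorem exists_wcomp_eq (F : IFS d N X) (n : ℕ) {x : Euc d} (hx : x ∈ F.K) :
    ∃ w : Fin n → Fin N, ∃ z ∈ F.K, wcomp F.f (List.ofFn w) z = x := by
  induction n generalizing x with
  | zero => exact ⟨Fin.elim0, x, hx, rfl⟩
  | succ n ih =>
    rw [F.K_inv] at hx
    obtain ⟨i, z, hz, rfl⟩ := mem_iUnion.1 hx
    obtain ⟨w, z', hz', rfl⟩ := ih hz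
    exact ⟨Fin.cons i w, z', hz', by rw [List.ofFn_cons]; rfl⟩

end IFS

namespace Dle

variable {d N : ℕ} {X : Set (Euc d)} {F G : IFS d N X} {δ : ℝ}

theorem dist_wcomp_le (h : Dle F G δ) (hδ : 0 ≤ δ) {c : ℝ} (hc : ∀ i, F.r i ≤ c) (hc1 : c < 1)
    (w : List (Fin N)) {z : Euc d} (hz : z ∈ X) :
    dist (wcomp F.f w z) (wcomp G.f w z) ≤ δ / (1 - c) := by
  have h1c : 0 < 1 - c := by linarith
  induction w with
  | nil => simpa [wcomp] using div_nonneg hδ h1c.le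
  | cons i w ih =>
    calc dist (F.f i (wcomp F.f w z)) (G.f i (wcomp G.f w z))
        ≤ dist (F.f i (wcomp F.f w z)) (F.f i (wcomp G.f w z))
          + dist (F.f i (wcomp G.f w z)) (G.f i (wcomp G.f w z)) := dist_triangle _ _ _
      _ ≤ c * (δ / (1 - c)) + δ := by
          rw [F.sim]
          gcongr
          · exact (F.r_pos i).le.trans (hc i)
          · exact hc i
          · exact h i _ (G.mapsTo_wcomp_X w hz)
      _ = δ / (1 - c) := by field_simp; ring

theorem abs_r_sub_mul_dist_le (h : Dle F G δ) {p q : Euc d} (hp : p ∈ X) (hq : q ∈ X)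
    (i : Fin N) : |G.r i - F.r i| * dist p q ≤ 2 * δ := by
  have key := dist_dist_dist_le (G.f i p) (G.f i q) (F.f i p) (F.f i q)
  rw [G.sim, F.sim, Real.dist_eq, ← sub_mul, abs_mul, abs_of_nonneg dist_nonneg,
    dist_comm (G.f i p), dist_comm (G.f i q)] at key
  linarith [h i p hp, h i q hq]

theorem dist_r_lt (h : Dle F G δ) {p q : Euc d} (hp : p ∈ X) (hq : q ∈ X) {ε : ℝ} (hε : 0 < ε)
    (hδ : 2 * δ < ε * dist p q) : dist G.r F.r < ε :=
  (dist_pi_lt_iff hε).2 fun i =>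
    lt_of_mul_lt_mul_right ((h.abs_r_sub_mul_dist_le hp hq i).trans_lt hδ) dist_nonneg

theorem dist_wcomp_wcomp_le {H : IFS d N X} (hX : Bornology.IsBounded X) (hG : Dle F G δ)
    (hH : Dle F H δ) (hδ : 0 ≤ δ) {c : ℝ} (hFc : ∀ i, F.r i ≤ c) (hHc : ∀ i, H.r i ≤ c)
    (hc1 : c < 1) (w : List (Fin N)) {z z' : Euc d} (hz : z ∈ X) (hz' : z' ∈ X) :
    dist (wcomp G.f w z) (wcomp H.f w z') ≤ 2 * δ / (1 - c) + c ^ w.length * diam X := by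
  calc dist (wcomp G.f w z) (wcomp H.f w z')
      ≤ dist (wcomp F.f w z) (wcomp G.f w z) + dist (wcomp F.f w z) (wcomp H.f w z)
        + dist (wcomp H.f w z) (wcomp H.f w z') := by
        linarith [dist_triangle4 (wcomp G.f w z) (wcomp F.f w z) (wcomp H.f w z) (wcomp H.f w z'),
          dist_comm (wcomp G.f w z) (wcomp F.f w z)]
    _ ≤ δ / (1 - c) + δ / (1 - c) + c ^ w.length * diam X := by
        gcongr
        · exact hG.dist_wcomp_le hδ hFc hc1 w hz
        · exact hH.dist_wcomp_le hδ hFc hc1 w hz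
        · have hpow : 0 ≤ c ^ w.length := by
            cases w with
            | nil => simp
            | cons i _ => exact pow_nonneg ((H.r_pos i).le.trans (hHc i)) _
          exact (H.dist_wcomp_le hHc w z z').trans
            (mul_le_mul_of_nonneg_left (dist_le_diam_of_mem hX hz hz') hpow)
    _ = 2 * δ / (1 - c) + c ^ w.length * diam X := by ring

end Dle

theorem sep.exists_dist_gt {d N : ℕ} {X : Set (Euc d)} {Δ : ℝ} {F : IFS d N X} (hF : sep Δ F)
    (hN : 2 ≤ N) : ∃ p ∈ X, ∃ q ∈ X, Δ < dist p q := by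
  obtain ⟨k, hk⟩ := F.K_ne
  exact ⟨_, F.K_sub (F.mapsTo_f_K _ hk), _, F.K_sub (F.mapsTo_f_K _ hk),
    hF ⟨0, by omega⟩ ⟨1, by omega⟩ (by simp [Fin.ext_iff]) _ ⟨k, hk, rfl⟩ _ ⟨k, hk, rfl⟩⟩

theorem IFS.exists_mem_K_forall_mapsTo_ball {d N : ℕ} {X : Set (Euc d)} {G H : IFS d N X}
    {n : ℕ} {ε : ℝ} (hGH : ∀ w : Fin n → Fin N, ∀ z ∈ X, ∀ z' ∈ X,
      dist (wcomp G.f (List.ofFn w) z) (wcomp H.f (List.ofFn w) z') ≤ ε)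
    {ρ : ℝ} (hερ : 2 * ε ≤ ρ) {x : Euc d} (hx : x ∈ G.K) (t : ℝ) :
    ∃ y ∈ H.K, ∀ w : Fin n → Fin N, (∃ k ∈ H.K, wcomp H.f (List.ofFn w) k ∈ ball y (t - ρ)) →
      MapsTo (wcomp G.f (List.ofFn w)) G.K (ball x t) := by
  obtain ⟨w₀, z, hz, rfl⟩ := G.exists_wcomp_eq n hx
  obtain ⟨k₀, hk₀⟩ := H.K_ne
  refine ⟨wcomp H.f (List.ofFn w₀) k₀, H.mapsTo_wcomp_K _ hk₀, fun w ⟨k, hk, hky⟩ k' hk' => ?_⟩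
  have h₁ := hGH w k' (G.K_sub hk') k (H.K_sub hk)
  have h₂ := hGH w₀ z (G.K_sub hz) k₀ (H.K_sub hk₀)
  rw [mem_ball] at hky ⊢
  linarith [dist_triangle4 (wcomp G.f (List.ofFn w) k') (wcomp H.f (List.ofFn w) k)
    (wcomp H.f (List.ofFn w₀) k₀) (wcomp G.f (List.ofFn w₀) z),
    dist_comm (wcomp G.f (List.ofFn w₀) z) (wcomp H.f (List.ofFn w₀) k₀)]

section SimilarityDimension

variable {N : ℕ} {r : Fin N → ℝ}

def cylWeight (r : Fin N → ℝ) (s : ℝ) {n : ℕ} (w : Fin n → Fin N) : ℝ :=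
  ∏ k, r (w k) ^ s

theorem exists_sum_rpow_eq_one (hN : N ≠ 0) (hr0 : ∀ i, 0 < r i) (hr1 : ∀ i, r i < 1) :
    ∃ s : ℝ, ∑ i, r i ^ s = 1 := by
  have hcont : Continuous fun s : ℝ => ∑ i, r i ^ s :=
    continuous_finsetSum _ fun i _ =>
      continuous_const.rpow continuous_id fun _ => Or.inl (hr0 i).ne'
  have hlim : Tendsto (fun s : ℝ => ∑ i, r i ^ s) atTop (𝓝 0) := by
    simpa using tendsto_finsetSum _ fun i _ =>
      tendsto_rpow_atTop_of_base_lt_one _ (by linarith [hr0 i]) (hr1 i)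
  obtain ⟨s₁, hs₁⟩ := (hlim.eventually_le_const zero_lt_one).exists
  have h0 : 1 ≤ ∑ i, r i ^ (0 : ℝ) := by simpa using Nat.one_le_iff_ne_zero.2 hN
  exact Set.mem_range.1 (intermediate_value_univ s₁ 0 hcont ⟨hs₁, h0⟩)

theorem continuousAt_sum_rpow (hr0 : ∀ i, 0 < r i) (s : ℝ) :
    ContinuousAt (fun ρ : Fin N → ℝ => ∑ i, ρ i ^ s) r :=
  tendsto_finsetSum _ fun i _ =>
    (continuous_apply i).continuousAt.rpow_const (Or.inl (hr0 i).ne')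

theorem continuousAt_cylWeight (hr0 : ∀ i, 0 < r i) (s : ℝ) {n : ℕ} (w : Fin n → Fin N) :
    ContinuousAt (fun p : (Fin N → ℝ) × ℝ => cylWeight p.1 p.2 w) (r, s) :=
  tendsto_finsetProd _ fun k _ =>
    ((continuous_apply (w k)).comp continuous_fst).continuousAt.rpow continuous_snd.continuousAt
      (Or.inl (hr0 (w k)).ne')

theorem eventually_abs_sub_lt_of_sum_rpow_eq_one (hr0 : ∀ i, 0 < r i) (hr1 : ∀ i, r i < 1)
    {s₀ : ℝ} (hs₀ : ∑ i, r i ^ s₀ = 1) {ε : ℝ} (hε : 0 < ε) :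
    ∀ᶠ ρ in 𝓝 r, ∀ s, ∑ i, ρ i ^ s = 1 → |s - s₀| < ε := by
  have hne : (Finset.univ : Finset (Fin N)).Nonempty :=
    Finset.nonempty_of_sum_ne_zero (hs₀.trans_ne one_ne_zero)
  have hunit : ∀ᶠ ρ in 𝓝 r, ∀ i, 0 < ρ i ∧ ρ i ≤ 1 := eventually_all.2 fun i =>
    (continuous_apply i).continuousAt.eventually (Ioo_mem_nhds (hr0 i) (hr1 i))
      |>.mono fun _ h => ⟨h.1, h.2.le⟩
  have hup : ∀ᶠ ρ in 𝓝 r, ∑ i, ρ i ^ (s₀ + ε) < 1 := by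
    refine (continuousAt_sum_rpow hr0 _).eventually_lt_const ?_
    rw [← hs₀]
    exact Finset.sum_lt_sum_of_nonempty hne fun i _ =>
      Real.rpow_lt_rpow_of_exponent_gt (hr0 i) (hr1 i) (by linarith)
  have hlow : ∀ᶠ ρ in 𝓝 r, 1 < ∑ i, ρ i ^ (s₀ - ε) := by
    refine (continuousAt_sum_rpow hr0 _).eventually_const_lt ?_
    rw [← hs₀]
    exact Finset.sum_lt_sum_of_nonempty hne fun i _ =>
      Real.rpow_lt_rpow_of_exponent_gt (hr0 i) (hr1 i) (by linarith)
  filter_upwards [hunit, hup, hlow] with ρ hρ hup hlow s hs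
  have anti : ∀ {a b : ℝ}, a ≤ b → ∑ i, ρ i ^ b ≤ ∑ i, ρ i ^ a := fun hab =>
    Finset.sum_le_sum fun i _ => Real.rpow_le_rpow_of_exponent_ge (hρ i).1 (hρ i).2 hab
  rw [abs_sub_lt_iff]
  constructor
  · by_contra! h
    linarith [anti (show s₀ + ε ≤ s by linarith)]
  · by_contra! h
    linarith [anti (show s ≤ s₀ - ε by linarith)]

/-- The similarity dimension depends continuously on the ratios. -/
theorem eventually_of_sum_rpow_eq_one (hr0 : ∀ i, 0 < r i) (hr1 : ∀ i, r i < 1) {s₀ : ℝ}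
    (hs₀ : ∑ i, r i ^ s₀ = 1) {P : (Fin N → ℝ) → ℝ → Prop}
    (hP : ∀ᶠ p in 𝓝 (r, s₀), P p.1 p.2) :
    ∀ᶠ ρ in 𝓝 r, ∀ s, ∑ i, ρ i ^ s = 1 → P ρ s := by
  rw [nhds_prod_eq] at hP
  obtain ⟨pa, hpa, pb, hpb, hab⟩ := eventually_prod_iff.1 hP
  obtain ⟨ε, hε, hball⟩ := Metric.eventually_nhds_iff.1 hpb
  filter_upwards [hpa, eventually_abs_sub_lt_of_sum_rpow_eq_one hr0 hr1 hs₀ hε]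
    with ρ ha hs s hsum
  exact hab ha (hball (by rw [Real.dist_eq]; exact hs s hsum))

end SimilarityDimension

def IsSelfSimilar {d N : ℕ} {X : Set (Euc d)} (F : IFS d N X) (s : ℝ) (μ : Measure (Euc d)) :
    Prop :=
  ∀ A : Set (Euc d), MeasurableSet A → μ A = ∑ i, ENNReal.ofReal (F.r i ^ s) * μ (F.f i ⁻¹' A)

namespace IsSelfSimilar

variable {d N : ℕ} {X : Set (Euc d)} {F : IFS d N X} {s : ℝ} {μ : Measure (Euc d)}

theorem measure_eq_sum (h : IsSelfSimilar F s μ) (n : ℕ) {A : Set (Euc d)}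
    (hA : MeasurableSet A) :
    μ A = ∑ w : Fin n → Fin N,
      ENNReal.ofReal (cylWeight F.r s w) * μ (wcomp F.f (List.ofFn w) ⁻¹' A) := by
  induction n generalizing A with
  | zero => simp [wcomp, cylWeight]
  | succ n ih =>
    rw [h A hA, ← (Fin.consEquiv fun _ => Fin N).sum_comp, Fintype.sum_prod_type]
    refine Finset.sum_congr rfl fun i _ => ?_
    rw [ih (hA.preimage (F.lipschitzWith_f i).continuous.measurable), Finset.mul_sum]
    refine Finset.sum_congr rfl fun v _ => ?_
    have hcons : (Fin.consEquiv fun _ => Fin N) (i, v) = Fin.cons i v := rfl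
    simp only [hcons, List.ofFn_cons, cylWeight, Fin.prod_univ_succ, Fin.cons_zero, Fin.cons_succ,
      ENNReal.ofReal_mul (Real.rpow_nonneg (F.r_pos i).le s), mul_assoc]
    rfl

theorem sum_cylWeight [IsProbabilityMeasure μ] (h : IsSelfSimilar F s μ) (n : ℕ) :
    ∑ w : Fin n → Fin N, ENNReal.ofReal (cylWeight F.r s w) = 1 := by
  simpa using (h.measure_eq_sum n MeasurableSet.univ).symm

theorem measure_le_of_forall_le_preimage [IsProbabilityMeasure μ] (h : IsSelfSimilar F s μ)
    {n : ℕ} {A B : Set (Euc d)} (hA : MeasurableSet A)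
    (hB : ∀ w : Fin n → Fin N, μ B ≤ μ (wcomp F.f (List.ofFn w) ⁻¹' A)) : μ B ≤ μ A :=
  calc μ B = ∑ w : Fin n → Fin N, ENNReal.ofReal (cylWeight F.r s w) * μ B := by
        rw [← Finset.sum_mul, h.sum_cylWeight, one_mul]
    _ ≤ ∑ w : Fin n → Fin N,
          ENNReal.ofReal (cylWeight F.r s w) * μ (wcomp F.f (List.ofFn w) ⁻¹' A) :=
        Finset.sum_le_sum fun w _ => mul_le_mul_right (hB w) _
    _ = μ A := (h.measure_eq_sum n hA).symm

theorem measure_thickening_K [IsProbabilityMeasure μ] (h : IsSelfSimilar F s μ) {ε : ℝ}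
    (hε : 0 < ε) : μ (thickening ε F.K) = 1 := by
  obtain ⟨c, hc0, hc1, hc⟩ := F.exists_ratio_lt
  obtain ⟨k, hk⟩ := F.K_ne
  -- Cylinders of depth `n` shrink `closedBall k R` into `thickening ε K` once `c ^ n * R < ε`.
  have hball : ∀ R : ℕ, μ (closedBall k R) ≤ μ (thickening ε F.K) := fun R => by
    have hlim : Tendsto (fun n : ℕ => c ^ n * R) atTop (𝓝 0) := by
      simpa using (tendsto_pow_atTop_nhds_zero_of_lt_one hc0.le hc1).mul_const (R : ℝ)
    obtain ⟨n, hn⟩ := (hlim.eventually_lt_const hε).exists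
    refine h.measure_le_of_forall_le_preimage (n := n) isOpen_thickening.measurableSet
      fun w => measure_mono fun x hx => ?_
    show wcomp F.f (List.ofFn w) x ∈ thickening ε F.K
    refine mem_thickening_iff.2 ⟨_, F.mapsTo_wcomp_K (List.ofFn w) hk, ?_⟩
    calc dist (wcomp F.f (List.ofFn w) x) (wcomp F.f (List.ofFn w) k)
        ≤ c ^ (List.ofFn w).length * dist x k := F.dist_wcomp_le (fun i => (hc i).le) _ x k
      _ ≤ c ^ n * R := by
        rw [List.length_ofFn]
        exact mul_le_mul_of_nonneg_left (mem_closedBall.1 hx) (pow_nonneg hc0.le n)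
      _ < ε := hn
  refine le_antisymm prob_le_one ?_
  have hmono : Monotone fun R : ℕ => closedBall k R := fun a b hab =>
    closedBall_subset_closedBall (by exact_mod_cast hab)
  rw [← measure_univ (μ := μ), ← iUnion_closedBall_nat k, hmono.measure_iUnion]
  exact iSup_le hball

theorem measure_K [IsProbabilityMeasure μ] (h : IsSelfSimilar F s μ) : μ F.K = 1 := by
  refine tendsto_nhds_unique (tendsto_measure_thickening_of_isClosed
    ⟨1, one_pos, measure_ne_top _ _⟩ F.K_cpt.isClosed) ?_
  exact tendsto_const_nhds.congr'
    (eventually_mem_nhdsWithin.mono fun ε hε => (h.measure_thickening_K hε).symm)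

theorem measure_le_sum_cylWeight [IsProbabilityMeasure μ] (h : IsSelfSimilar F s μ) {n : ℕ}
    {A : Set (Euc d)} (hA : MeasurableSet A) {S : Finset (Fin n → Fin N)}
    (hS : ∀ w, (∃ k ∈ F.K, wcomp F.f (List.ofFn w) k ∈ A) → w ∈ S) :
    μ A ≤ ∑ w ∈ S, ENNReal.ofReal (cylWeight F.r s w) := by
  have hKc : μ F.Kᶜ = 0 := prob_compl_eq_zero_iff F.K_cpt.measurableSet |>.2 h.measure_K
  rw [h.measure_eq_sum n hA, ← Finset.sum_subset (Finset.subset_univ S) fun w _ hw => ?_]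
  · exact Finset.sum_le_sum fun w _ => (mul_le_mul_right prob_le_one _).trans_eq (mul_one _)
  · exact mul_eq_zero_of_right _ (measure_mono_null (fun z hz hzK => hw (hS w ⟨z, hzK, hz⟩)) hKc)

theorem sum_cylWeight_le_measure [IsProbabilityMeasure μ] (h : IsSelfSimilar F s μ) {n : ℕ}
    {A : Set (Euc d)} (hA : MeasurableSet A) {S : Finset (Fin n → Fin N)}
    (hS : ∀ w ∈ S, MapsTo (wcomp F.f (List.ofFn w)) F.K A) :
    ∑ w ∈ S, ENNReal.ofReal (cylWeight F.r s w) ≤ μ A :=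
  calc ∑ w ∈ S, ENNReal.ofReal (cylWeight F.r s w)
      = ∑ w ∈ S, ENNReal.ofReal (cylWeight F.r s w) * μ F.K := by simp [h.measure_K]
    _ ≤ ∑ w ∈ S, ENNReal.ofReal (cylWeight F.r s w) * μ (wcomp F.f (List.ofFn w) ⁻¹' A) :=
      Finset.sum_le_sum fun w hw => mul_le_mul_right (measure_mono (hS w hw)) _
    _ ≤ ∑ w, ENNReal.ofReal (cylWeight F.r s w) * μ (wcomp F.f (List.ofFn w) ⁻¹' A) :=
      Finset.sum_le_sum_of_subset (Finset.subset_univ S)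
    _ = μ A := (h.measure_eq_sum n hA).symm

theorem measure_le_measure_add {G : IFS d N X} {sG : ℝ} {μG : Measure (Euc d)}
    [IsProbabilityMeasure μ] [IsProbabilityMeasure μG] (h : IsSelfSimilar F s μ)
    (hG : IsSelfSimilar G sG μG) {n : ℕ} {A B : Set (Euc d)} (hA : MeasurableSet A)
    (hB : MeasurableSet B)
    (hAB : ∀ w : Fin n → Fin N,
      (∃ k ∈ F.K, wcomp F.f (List.ofFn w) k ∈ A) → MapsTo (wcomp G.f (List.ofFn w)) G.K B)
    {b : ℝ} (hw : ∀ w : Fin n → Fin N, cylWeight F.r s w ≤ cylWeight G.r sG w + b) :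
    μ A ≤ μG B + ENNReal.ofReal ((N : ℝ) ^ n * b) := by
  classical
  set S := Finset.univ.filter fun w : Fin n → Fin N => ∃ k ∈ F.K, wcomp F.f (List.ofFn w) k ∈ A
  calc μ A ≤ ∑ w ∈ S, ENNReal.ofReal (cylWeight F.r s w) :=
        h.measure_le_sum_cylWeight hA fun w hw => Finset.mem_filter.2 ⟨Finset.mem_univ w, hw⟩
    _ ≤ ∑ w ∈ S, (ENNReal.ofReal (cylWeight G.r sG w) + ENNReal.ofReal b) :=
        Finset.sum_le_sum fun w _ => (ENNReal.ofReal_le_ofReal (hw w)).trans ENNReal.ofReal_add_le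
    _ = ∑ w ∈ S, ENNReal.ofReal (cylWeight G.r sG w) + S.card * ENNReal.ofReal b := by
        rw [Finset.sum_add_distrib, Finset.sum_const, nsmul_eq_mul]
    _ ≤ μG B + (N ^ n : ℕ) * ENNReal.ofReal b := by
        gcongr
        · exact hG.sum_cylWeight_le_measure hB fun w hw => hAB w (Finset.mem_filter.1 hw).2
        · simpa using Finset.card_le_univ S
    _ = μG B + ENNReal.ofReal ((N : ℝ) ^ n * b) := by
        rw [ENNReal.ofReal_mul (by positivity)]
        simp

theorem exists_measure_ball_le {G H : IFS d N X} {sG : ℝ} {μG : Measure (Euc d)}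
    [IsProbabilityMeasure μ] [IsProbabilityMeasure μG] (h : IsSelfSimilar H s μ)
    (hG : IsSelfSimilar G sG μG) (hX : Bornology.IsBounded X) {δ : ℝ} (hFG : Dle F G δ)
    (hFH : Dle F H δ) (hδ : 0 ≤ δ) {c : ℝ} (hFc : ∀ i, F.r i ≤ c) (hHc : ∀ i, H.r i ≤ c)
    (hc1 : c < 1) {n : ℕ} {ρ : ℝ} (hρ : 2 * δ / (1 - c) + c ^ n * diam X ≤ ρ / 2) {b : ℝ}
    (hw : ∀ w : Fin n → Fin N, cylWeight H.r s w ≤ cylWeight G.r sG w + b) {x : Euc d}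
    (hx : x ∈ G.K) (t : ℝ) :
    ∃ y ∈ H.K, μ (ball y (t - ρ)) ≤ μG (ball x t) + ENNReal.ofReal ((N : ℝ) ^ n * b) := by
  have hGH : ∀ w : Fin n → Fin N, ∀ z ∈ X, ∀ z' ∈ X,
      dist (wcomp G.f (List.ofFn w) z) (wcomp H.f (List.ofFn w) z') ≤ ρ / 2 := fun w z hz z' hz' =>
    (hFG.dist_wcomp_wcomp_le hX hFH hδ hFc hHc hc1 _ hz hz').trans (by rwa [List.length_ofFn])
  obtain ⟨y, hy, hcyl⟩ := IFS.exists_mem_K_forall_mapsTo_ball hGH (ρ := ρ) (by linarith) hx t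
  exact ⟨y, hy, h.measure_le_measure_add hG measurableSet_ball measurableSet_ball hcyl hw⟩

end IsSelfSimilar

theorem stmt15_general
    {d N : ℕ} (hN : 2 ≤ N) (X : Set (Euc d)) (hX : IsCompact X)
    (Δ : ℝ) (hΔ : 0 < Δ)
    (F : IFS d N X) (hF : sep Δ F)
    (ρ : ℝ) (hρ0 : 0 < ρ) (γ : ℝ) (hγ : 0 < γ) :
    ∃ δ₁ > (0 : ℝ), ∀ G H : IFS d N X, sep Δ G → sep Δ H →
      Dle F G δ₁ → Dle F H δ₁ →
      ∀ sG sH : ℝ, (∑ i, G.r i ^ sG = 1) → (∑ i, H.r i ^ sH = 1) →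
      ∀ μG : Measure (Euc d), IsProbabilityMeasure μG →
      (∀ A : Set (Euc d), MeasurableSet A →
        μG A = ∑ i, ENNReal.ofReal (G.r i ^ sG) * μG (G.f i ⁻¹' A)) →
      ∀ μH : Measure (Euc d), IsProbabilityMeasure μH →
      (∀ A : Set (Euc d), MeasurableSet A →
        μH A = ∑ i, ENNReal.ofReal (H.r i ^ sH) * μH (H.f i ⁻¹' A)) →
      ∀ rG : ℝ, IsLeast (Set.range G.r) rG →
      ∀ x ∈ G.K, ∀ t ∈ Set.Icc (rG * Δ / 2) (Δ / 2),
        ∃ y ∈ H.K, μH (ball y (t - ρ)) ≤ μG (ball x t) + ENNReal.ofReal γ := by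
  obtain ⟨p, hp, q, hq, hpq⟩ := hF.exists_dist_gt hN
  have hpq0 : 0 < dist p q := hΔ.trans hpq
  obtain ⟨c, hc0, hc1, hFc⟩ := F.exists_ratio_lt
  obtain ⟨n, hn⟩ : ∃ n : ℕ, c ^ n * diam X < ρ / 4 :=
    ((tendsto_pow_atTop_nhds_zero_of_lt_one hc0.le hc1).mul_const _ |>.eventually_lt_const
      (by simpa using hρ0)).exists
  obtain ⟨sF, hsF⟩ := exists_sum_rpow_eq_one (by omega) F.r_pos F.r_lt1
  set b := γ / (2 * (N : ℝ) ^ n) with hb_def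
  have hnear : ∀ᶠ r in 𝓝 F.r, (∀ i, r i < c) ∧ ∀ s, ∑ i, r i ^ s = 1 →
      ∀ w : Fin n → Fin N, dist (cylWeight r s w) (cylWeight F.r sF w) < b :=
    (eventually_all.2 fun i => (continuous_apply i).continuousAt.eventually_lt_const (hFc i)).and
      (eventually_of_sum_rpow_eq_one F.r_pos F.r_lt1 hsF <| eventually_all.2 fun w =>
        (continuousAt_cylWeight F.r_pos sF w).eventually (ball_mem_nhds _ (by positivity)))
  obtain ⟨ε, hε, hnear⟩ := Metric.eventually_nhds_iff.1 hnear
  set δ₁ := min ((1 - c) * ρ / 8) (ε * dist p q / 4)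
  have hδ₁ρ : 2 * δ₁ / (1 - c) ≤ ρ / 4 := by
    rw [div_le_iff₀ (by linarith)]
    linarith [min_le_left ((1 - c) * ρ / 8) (ε * dist p q / 4)]
  have hδ₁ε : 2 * δ₁ < ε * dist p q := by
    linarith [min_le_right ((1 - c) * ρ / 8) (ε * dist p q / 4), mul_pos hε hpq0]
  refine ⟨δ₁, by positivity, fun G H _ _ hG hH sG sH hsG hsH μG _ hμG μH _ hμH _ _ x hx t _ => ?_⟩
  obtain ⟨hGc, hGw⟩ := hnear (hG.dist_r_lt hp hq hε hδ₁ε)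
  obtain ⟨hHc, hHw⟩ := hnear (hH.dist_r_lt hp hq hε hδ₁ε)
  have hw : ∀ w, cylWeight H.r sH w ≤ cylWeight G.r sG w + 2 * b := fun w => by
    have hGw := hGw sG hsG w
    have hHw := hHw sH hsH w
    rw [Real.dist_eq, abs_sub_lt_iff] at hGw hHw
    linarith
  obtain ⟨y, hy, hle⟩ := IsSelfSimilar.exists_measure_ball_le hμH hμG hX.isBounded hG hH
    (ρ := ρ) (by positivity) (fun i => (hFc i).le) (fun i => (hHc i).le) hc1 (by linarith) hw hx t
  exact ⟨y, hy, hle.trans_eq (by rw [hb_def]; field_simp)⟩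

/-- Lemma 3.2: for `f ∈ M_Δ`, `0 < ρ < r_*(f)Δ/4` and `γ > 0`
there is `δ₁ > 0` such that for `g, h ∈ M_Δ` with `D(f,g) ≤ δ₁`, `D(f,h) ≤ δ₁`,
every ball `B(x,r)` centered in `K(g)` with `r ∈ [r_*(g)Δ/2, Δ/2]` admits a ball
`B(y,r−ρ)` centered in `K(h)` with `λ(h)(B(y,r−ρ)) − γ ≤ λ(g)(B(x,r))`. -/
theorem stmt15
    {d N : ℕ} (hN : 2 ≤ N) (X : Set (Euc d)) (hX : IsCompact X)
    (Δ : ℝ) (hΔ : 0 < Δ)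
    (F : IFS d N X) (hF : sep Δ F)
    (rF : ℝ) (hrF : IsLeast (Set.range F.r) rF)
    (ρ : ℝ) (hρ0 : 0 < ρ) (hρ : ρ < rF * Δ / 4) (γ : ℝ) (hγ : 0 < γ) :
    ∃ δ₁ > (0 : ℝ), ∀ G H : IFS d N X, sep Δ G → sep Δ H →
      Dle F G δ₁ → Dle F H δ₁ →
      ∀ sG sH : ℝ, (∑ i, G.r i ^ sG = 1) → (∑ i, H.r i ^ sH = 1) →
      ∀ μG : Measure (Euc d), IsProbabilityMeasure μG →
      (∀ A : Set (Euc d), MeasurableSet A →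
        μG A = ∑ i, ENNReal.ofReal (G.r i ^ sG) * μG (G.f i ⁻¹' A)) →
      ∀ μH : Measure (Euc d), IsProbabilityMeasure μH →
      (∀ A : Set (Euc d), MeasurableSet A →
        μH A = ∑ i, ENNReal.ofReal (H.r i ^ sH) * μH (H.f i ⁻¹' A)) →
      ∀ rG : ℝ, IsLeast (Set.range G.r) rG →
      ∀ x ∈ G.K, ∀ t ∈ Set.Icc (rG * Δ / 2) (Δ / 2),
        ∃ y ∈ H.K, μH (ball y (t - ρ)) ≤ μG (ball x t) + ENNReal.ofReal γ :=
  stmt15_general hN X hX Δ hΔ F hF ρ hρ0 γ hγ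
end
end
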